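/- Let R be a Noetherian ring, I an ideal of R, M a finitely generated R-module, and J = (x_1, …, x_s) a reduction of I relative to M. Fix an integer ℓ ≥ r_J(I, M) and suppose that [(x_1, …, x_{i−1})M :_M x_i] ∩ I^{ℓ+1}M = (x_1, …, x_{i−1})I^ℓM for i = 1, …, s. Then for all n ≥ ℓ + 1 one has [(x_1, …, x_{i−1})M :_M x_i] ∩ I^nM = (x_1, …, x_{i−1})I^{n−1}M for i = 1, …, s. -/

import Mathlib

/- Preamble: self-contained definitions for reduction numbers, Ratliff-Rush closures,
Castelnuovo-Mumford regularity of blowup modules (via the graded Čech/Koszul-colimit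
description of local cohomology with respect to the irrelevant ideal), Hilbert-Samuel
functions/polynomials, postulation numbers, depth, Cohen-Macaulayness, Buchsbaum rings,
Ulrich ideals, Gorenstein rings, and integral closure of ideals. -/

open Classical

noncomputable section RRPaper

variable {R : Type*} [CommRing R]

/-- The colon submodule `(N :_M J) = { x ∈ M | J • x ⊆ N }`. -/
def mcolon {M : Type*} [AddCommGroup M] [Module R M] (N : Submodule R M) (J : Ideal R) :
    Submodule R M where
  carrier := {x | ∀ a ∈ J, a • x ∈ N}
  add_mem' := by
    intro x y hx hy a ha
    rw [smul_add]; exact N.add_mem (hx a ha) (hy a ha)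
  zero_mem' := by intro a ha; rw [smul_zero]; exact N.zero_mem
  smul_mem' := by
    intro c x hx a ha
    show a • c • x ∈ N
    rw [smul_smul, mul_comm, ← smul_smul]
    exact N.smul_mem c (hx a ha)

/-- The graded piece `I^n M` of the Rees module, for an integer `n` (zero in negative
degrees). -/
def ipow (I : Ideal R) (M : Type*) [AddCommGroup M] [Module R M] (n : ℤ) : Submodule R M :=
  if 0 ≤ n then (I ^ n.toNat) • ⊤ else ⊥

/-- The Ratliff-Rush closure of `I^m` with respect to `M`:
`⋃_{n ≥ 1} (I^{m+n} M :_M I^n)`.  (The union is increasing, hence equals the `iSup`.) -/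
def rrc (I : Ideal R) (M : Type*) [AddCommGroup M] [Module R M] (m : ℕ) : Submodule R M :=
  ⨆ n : ℕ, mcolon ((I ^ (m + n + 1)) • (⊤ : Submodule R M)) (I ^ (n + 1))

/-- `x` is an `M`-superficial element of `I`. -/
def IsSuperficial (I : Ideal R) (M : Type*) [AddCommGroup M] [Module R M] (x : R) : Prop :=
  x ∈ I ∧ ∃ c : ℕ, ∀ n ≥ c,
    mcolon ((I ^ (n + 1)) • (⊤ : Submodule R M)) (Ideal.span {x}) ⊓ ((I ^ c) • ⊤)
      = (I ^ n) • (⊤ : Submodule R M)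

/-- `J` is a reduction of `I` relative to `M`: `J ⊆ I` and `J I^n M = I^{n+1} M` for some
`n ≥ 0`. -/
def IsReduction (J I : Ideal R) (M : Type*) [AddCommGroup M] [Module R M] : Prop :=
  J ≤ I ∧ ∃ n : ℕ, J • ((I ^ n) • (⊤ : Submodule R M)) = (I ^ (n + 1)) • ⊤

/-- The reduction number `r_J(I, M) = min { m | J I^m M = I^{m+1} M }`. -/
def redNum (J I : Ideal R) (M : Type*) [AddCommGroup M] [Module R M] : ℕ :=
  sInf {m : ℕ | J • ((I ^ m) • (⊤ : Submodule R M)) = (I ^ (m + 1)) • ⊤}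

/-- `J` is a minimal reduction of `I` relative to `M`. -/
def IsMinReduction (J I : Ideal R) (M : Type*) [AddCommGroup M] [Module R M] : Prop :=
  IsReduction J I M ∧ ∀ K : Ideal R, IsReduction K I M → K ≤ J → K = J

/-- The reduction number `r(I, M)`: minimum of `r_J(I, M)` over minimal reductions `J`. -/
def redNumAbs (I : Ideal R) (M : Type*) [AddCommGroup M] [Module R M] : ℕ :=
  sInf {r : ℕ | ∃ J : Ideal R, IsMinReduction J I M ∧ redNum J I M = r}

/-- `s*(I, M) = min { n ≥ 1 | Ĩ^i_M = I^i M for all i ≥ n }`. -/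
def sStar (I : Ideal R) (M : Type*) [AddCommGroup M] [Module R M] : ℕ :=
  sInf {n : ℕ | 1 ≤ n ∧ ∀ i ≥ n, rrc I M i = (I ^ i) • (⊤ : Submodule R M)}

section Cech

variable {M : Type*} [AddCommGroup M] [Module R M]

/-- The Koszul-Čech codifferential at stage `t` for the family `a : Fin r → R`:
`(d x) T = ∑_{i ∈ T} (-1)^{#{j ∈ T | j < i}} a_i^t • x (T \ {i})`. -/
def cechD {r : ℕ} (a : Fin r → R) (t : ℕ) :
    (Finset (Fin r) → M) →ₗ[R] (Finset (Fin r) → M) where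
  toFun x := fun T =>
    ∑ i ∈ T, (((-1 : R) ^ (T.filter fun j => j < i).card * a i ^ t)) • x (T.erase i)
  map_add' x y := by
    funext T
    simp [smul_add, Finset.sum_add_distrib]
  map_smul' c x := by
    funext T
    simp only [Pi.smul_apply, RingHom.id_apply, Finset.smul_sum]
    refine Finset.sum_congr rfl fun i _ => ?_
    rw [smul_smul, mul_comm, ← smul_smul]

/-- The transition map from Koszul stage `t` to stage `t + s`: componentwise
multiplication by `(∏_{i ∈ T} a_i)^s`. -/
def cechT {r : ℕ} (a : Fin r → R) (s : ℕ) :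
    (Finset (Fin r) → M) →ₗ[R] (Finset (Fin r) → M) where
  toFun x := fun T => ((∏ i ∈ T, a i) ^ s) • x T
  map_add' x y := by funext T; simp [smul_add]
  map_smul' c x := by
    funext T
    simp only [Pi.smul_apply, RingHom.id_apply]
    rw [smul_smul, mul_comm, ← smul_smul]

/-- `x` is a degree-`n` cochain in homological degree `j` at Koszul stage `t`, for the
grading given by `fil`. -/
def cechChainMem (fil : ℤ → Submodule R M) {r : ℕ} (j t : ℕ) (n : ℤ)
    (x : Finset (Fin r) → M) : Prop :=
  ∀ T : Finset (Fin r),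
    (T.card = j → x T ∈ fil (n + (t : ℤ) * (j : ℤ))) ∧ (T.card ≠ j → x T = 0)

/-- `z` is a coboundary (modulo the submodules `sub`) in degree `n`, homological degree
`j`, at Koszul stage `t`. -/
def cechCobound (fil sub : ℤ → Submodule R M) {r : ℕ} (a : Fin r → R) (j t : ℕ) (n : ℤ)
    (z : Finset (Fin r) → M) : Prop :=
  ∃ y : Finset (Fin r) → M, cechChainMem fil (j - 1) t n y ∧ (j = 0 → y = 0) ∧
    ∀ T : Finset (Fin r), T.card = j →
      z T - cechD a t y T ∈ sub (n + (t : ℤ) * (j : ℤ))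

/-- Nonvanishing of the degree-`n` graded piece of the `j`-th local cohomology (with
respect to the irrelevant ideal) of the graded module whose `n`-th piece is
`fil n / sub n` (computed via the colimit over `t` of Koszul cohomologies of the
families `a^t`): there is a stage-`t` cocycle whose image at every later stage is not a
coboundary. -/
def lcDegNonzero (fil sub : ℤ → Submodule R M) {r : ℕ} (a : Fin r → R) (j : ℕ) (n : ℤ) :
    Prop :=
  ∃ (t : ℕ) (x : Finset (Fin r) → M), cechChainMem fil j t n x ∧
    (∀ T : Finset (Fin r), T.card = j + 1 →
      cechD a t x T ∈ sub (n + (t : ℤ) * ((j : ℤ) + 1))) ∧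
    ∀ s : ℕ, ¬ cechCobound fil sub a j (t + s) n (cechT a s x)

/-- The Castelnuovo-Mumford regularity `max_j { a_j + j }` of the graded module with
pieces `fil n / sub n`, computed with respect to the degree-one "multiplication"
elements `a : Fin r → R`. -/
def cmReg (fil sub : ℤ → Submodule R M) {r : ℕ} (a : Fin r → R) : ℤ :=
  sSup {m : ℤ | ∃ (j : ℕ) (n : ℤ), lcDegNonzero fil sub a j n ∧ m = n + j}

end Cech

/-- The Castelnuovo-Mumford regularity of the Rees module `R(I, M) = ⊕_{n ≥ 0} I^n M`,
computed via a generating family `a` of `I` (whose degree-one elements `a_i t` generate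
the irrelevant ideal of the Rees algebra). -/
def regRees (I : Ideal R) (M : Type*) [AddCommGroup M] [Module R M] {r : ℕ}
    (a : Fin r → R) : ℤ :=
  cmReg (fun n => ipow I M n) (fun _ => ⊥) a

/-- The Castelnuovo-Mumford regularity of the associated graded module
`G(I, M) = ⊕_{n ≥ 0} I^n M / I^{n+1} M`, computed via a generating family `a` of `I`. -/
def regGr (I : Ideal R) (M : Type*) [AddCommGroup M] [Module R M] {r : ℕ}
    (a : Fin r → R) : ℤ :=
  cmReg (fun n => ipow I M n) (fun n => ipow I M (n + 1)) a

/-- Length of a module, as the Krull dimension of its submodule lattice (junk value `0`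
for infinite length, extracted as a natural number). -/
def lenNat (R M : Type*) [CommRing R] [AddCommGroup M] [Module R M] : ℕ :=
  (WithBot.unbotD 0 (Order.krullDim (Submodule R M))).toNat

/-- The Hilbert-Samuel function `H_I(n) = λ(R/I^n)` for `n ≥ 1`, and `0` for `n ≤ 0`. -/
def hilbF (I : Ideal R) (n : ℤ) : ℚ :=
  if 1 ≤ n then (lenNat R (R ⧸ I ^ n.toNat) : ℚ) else 0

/-- The Hilbert-Samuel polynomial of `I`: the polynomial agreeing with `H_I(n)` for all
`n ≫ 0` (junk value `0` if it does not exist). -/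
def hsPoly (I : Ideal R) : Polynomial ℚ :=
  if h : ∃ P : Polynomial ℚ, ∃ N : ℤ, ∀ n : ℤ, N ≤ n → P.eval (n : ℚ) = hilbF I n then
    h.choose
  else 0

/-- The postulation number `ρ(I) = sup { n ∈ ℤ | H_I(n) ≠ P_I(n) }`. -/
def postulation (I : Ideal R) : ℤ :=
  sSup {n : ℤ | hilbF I n ≠ (hsPoly I).eval (n : ℚ)}

/-- The multiplicity `e_0(I)` of an `m`-primary ideal in a `d`-dimensional local ring:
`d!` times the degree-`d` coefficient of the Hilbert-Samuel polynomial. -/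
def multNum (I : Ideal R) (d : ℕ) : ℚ :=
  (hsPoly I).coeff d * (Nat.factorial d : ℚ)

/-- `f` is an `M`-regular sequence: each `f i` is a non-zero-divisor modulo the previous
ones, and `(f) M ≠ M`. -/
def IsRegSeqOn {k : ℕ} (f : Fin k → R) (M : Type*) [AddCommGroup M] [Module R M] : Prop :=
  (Ideal.span (Set.range f)) • (⊤ : Submodule R M) ≠ ⊤ ∧
  ∀ i : Fin k, ∀ m : M,
    f i • m ∈ (Ideal.span (f '' {j | j < i})) • (⊤ : Submodule R M) →
      m ∈ (Ideal.span (f '' {j | j < i})) • (⊤ : Submodule R M)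

/-- The depth of `M` over a local ring `R`: the maximal length of an `M`-regular
sequence contained in the maximal ideal. -/
def mdepth (R M : Type*) [CommRing R] [IsLocalRing R] [AddCommGroup M] [Module R M] : ℕ :=
  sSup {k : ℕ | ∃ f : Fin k → R,
    (∀ i, f i ∈ IsLocalRing.maximalIdeal R) ∧ IsRegSeqOn f M}

/-- The dimension of a module: the Krull dimension of `R / ann M`. -/
def mdim (R M : Type*) [CommRing R] [AddCommGroup M] [Module R M] : WithBot (WithTop ℕ) :=
  ringKrullDim (R ⧸ Module.annihilator R M)

/-- `M` is a Cohen-Macaulay `R`-module of dimension `s`. -/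
def IsCMMod (R M : Type*) [CommRing R] [IsLocalRing R] [AddCommGroup M] [Module R M]
    (s : ℕ) : Prop :=
  mdim R M = (s : ℕ) ∧ mdepth R M = s

/-- A parameter ideal of a `d`-dimensional local ring: generated by `d` elements and
primary to the maximal ideal. -/
def IsParamIdeal [IsLocalRing R] (d : ℕ) (Q : Ideal R) : Prop :=
  (∃ f : Fin d → R, Q = Ideal.span (Set.range f)) ∧
    Q.radical = IsLocalRing.maximalIdeal R

/-- `R` is a Buchsbaum local ring of dimension `d`: the difference
`λ(R/Q) - e_0(Q)` is the same for every parameter ideal `Q`. -/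
def IsBuchsbaum (R : Type*) [CommRing R] [IsLocalRing R] (d : ℕ) : Prop :=
  ∃ c : ℚ, ∀ Q : Ideal R, IsParamIdeal d Q → (lenNat R (R ⧸ Q) : ℚ) - multNum Q d = c

/-- An Ulrich ideal of a `d`-dimensional Cohen-Macaulay local ring: `m`-primary,
containing a parameter ideal `J` as a reduction with `r_J(I) ≤ 1`, and with `I/I²` free
over `R/I`. -/
def IsUlrich [IsLocalRing R] (d : ℕ) (I : Ideal R) : Prop :=
  I.radical = IsLocalRing.maximalIdeal R ∧
  (∃ J : Ideal R, IsParamIdeal d J ∧ IsReduction J I R ∧ redNum J I R ≤ 1) ∧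
  Module.Free (R ⧸ I) I.Cotangent

/-- `R` is a Gorenstein local ring of dimension `d`: it admits a regular sequence of
length `d` in the maximal ideal (so it is Cohen-Macaulay) such that the socle of the
quotient is one-dimensional. -/
def IsGorenstein (R : Type*) [CommRing R] [IsLocalRing R] (d : ℕ) : Prop :=
  ringKrullDim R = d ∧ ∃ f : Fin d → R,
    (∀ i, f i ∈ IsLocalRing.maximalIdeal R) ∧ IsRegSeqOn f R ∧
    lenNat R (mcolon (⊥ : Submodule R (R ⧸ Ideal.span (Set.range f)))
      (IsLocalRing.maximalIdeal R)) = 1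

/-- The minimal number of generators of an ideal. -/
def numGen (I : Ideal R) : ℕ :=
  sInf {k : ℕ | ∃ f : Fin k → R, Ideal.span (Set.range f) = I}

/-- `x` lies in the integral closure of the ideal `I`: it satisfies an equation
`x^m + a_1 x^{m-1} + ⋯ + a_m = 0` with `a_i ∈ I^i`. -/
def memIntClosure (I : Ideal R) (x : R) : Prop :=
  ∃ m : ℕ, 0 < m ∧ ∃ a : ℕ → R, (∀ i, 1 ≤ i → i ≤ m → a i ∈ I ^ i) ∧
    x ^ m + ∑ i ∈ Finset.Icc 1 m, a i * x ^ (m - i) = 0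

/-- `I` is integrally closed. -/
def IsIntClosed (I : Ideal R) : Prop := ∀ x : R, memIntClosure I x → x ∈ I

/-- `I` is a normal ideal: all powers `I^j`, `j ≥ 1`, are integrally closed. -/
def IsNormalIdeal (I : Ideal R) : Prop := ∀ j : ℕ, 1 ≤ j → IsIntClosed (I ^ j)

/-- The ideal of positive-degree elements of the Rees algebra `R[It] ⊆ R[t]`. -/
def reesPos (I : Ideal R) : Ideal (reesAlgebra I) :=
  RingHom.ker ((Polynomial.evalRingHom (0 : R)).comp (Subalgebra.val (reesAlgebra I)).toRingHom)

/-- The associated graded ring `G(I) = R(I)/I·R(I)`. -/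
def agr (I : Ideal R) : Type _ :=
  reesAlgebra I ⧸ (Ideal.map (algebraMap R (reesAlgebra I)) I)

instance (I : Ideal R) : CommRing (agr I) :=
  inferInstanceAs (CommRing (reesAlgebra I ⧸ (Ideal.map (algebraMap R (reesAlgebra I)) I)))

/-- The irrelevant ideal `G(I)_+` of the associated graded ring. -/
def agrPos (I : Ideal R) : Ideal (agr I) :=
  Ideal.map (Ideal.Quotient.mk (Ideal.map (algebraMap R (reesAlgebra I)) I)) (reesPos I)

end RRPaper

/-! The proof is an induction on `n`. Writing `J_i = (x_1, …, x_{i-1})`, an element `z` of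
`(J_i M :_M x_i) ∩ I^{n+1} M` lies in `J_i M` by the equality in degree `n`, and in
`J I^n M` because `n ≥ r_J(I, M)`. Peeling off the generators `x_s, …, x_i` one at a
time, each summand `x_t u` with `u ∈ I^n M` satisfies `x_t u ∈ J_t M`, so the equality in
degree `n` puts `u` in `J_t I^{n-1} M` and hence `x_t u` in `J_t I^n M`. -/

section ColonIntersection

variable {R : Type*} [CommRing R] {M : Type*} [AddCommGroup M] [Module R M]

theorem le_mcolon (N : Submodule R M) (J : Ideal R) : N ≤ mcolon N J :=
  fun _ hz _ _ => N.smul_mem _ hz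

theorem mem_mcolon_span_singleton {N : Submodule R M} {a : R} {z : M} :
    z ∈ mcolon N (Ideal.span {a}) ↔ a • z ∈ N := by
  refine ⟨fun h => h a (Ideal.mem_span_singleton_self a), fun h b hb => ?_⟩
  obtain ⟨c, rfl⟩ := Ideal.mem_span_singleton'.mp hb
  rw [mul_smul]
  exact N.smul_mem c h

theorem IsReduction.smul_pow_eq_of_redNum_le {J I : Ideal R} (h : IsReduction J I M) {m : ℕ}
    (hm : redNum J I M ≤ m) : J • ((I ^ m) • (⊤ : Submodule R M)) = (I ^ (m + 1)) • ⊤ := by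
  induction m, hm using Nat.le_induction with
  | base => exact Nat.sInf_mem h.2
  | succ m _ ih =>
    rw [pow_succ' I m, Submodule.mul_smul, ← Submodule.mul_smul J, mul_comm,
      Submodule.mul_smul, ih, ← Submodule.mul_smul, ← pow_succ']

theorem smul_le_mcolon_inf {K I L : Ideal R} (hKI : K ≤ I) (N : Submodule R M) :
    K • N ≤ mcolon (K • ⊤) L ⊓ I • N :=
  le_inf ((Submodule.smul_mono le_rfl le_top).trans (le_mcolon _ L))
    (Submodule.smul_mono_left hKI)

theorem mem_smul_of_mem_sup_span_singleton_smul {K I : Ideal R} {a : R} (ha : a ∈ I)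
    {N : Submodule R M} (hcol : mcolon (K • ⊤) (Ideal.span {a}) ⊓ I • N ≤ K • N) {z : M}
    (hz : z ∈ K • (⊤ : Submodule R M)) (hz' : z ∈ (K ⊔ Ideal.span {a}) • (I • N)) :
    z ∈ K • (I • N) := by
  rw [Submodule.sup_smul, Submodule.mem_sup] at hz'
  obtain ⟨w, hw, v, hv, rfl⟩ := hz'
  rw [Submodule.ideal_span_singleton_smul, Submodule.mem_smul_pointwise_iff_exists] at hv
  obtain ⟨u, hu, rfl⟩ := hv
  have hau : a • u ∈ K • (⊤ : Submodule R M) := by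
    simpa using Submodule.sub_mem _ hz (Submodule.smul_mono le_rfl le_top hw)
  have huK : u ∈ K • N := hcol ⟨mem_mcolon_span_singleton.mpr hau, hu⟩
  refine Submodule.add_mem _ hw ?_
  rw [← Submodule.mul_smul, mul_comm, Submodule.mul_smul]
  exact Submodule.smul_mem_smul ha huK

end ColonIntersection

section PartialSpan

variable {R : Type*} [CommRing R] {s : ℕ}

/-- `partialSpan x k` is the ideal `(x_j : j < k)`, i.e. `(x_1, …, x_k)` in the one-based
indexing of the paper. -/
def partialSpan (x : Fin s → R) (k : ℕ) : Ideal R :=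
  Ideal.span (x '' {j | (j : ℕ) < k})

theorem partialSpan_succ (x : Fin s → R) (t : Fin s) :
    partialSpan x ((t : ℕ) + 1) = partialSpan x t ⊔ Ideal.span {x t} := by
  have hset : {j : Fin s | (j : ℕ) < t + 1} = {j : Fin s | (j : ℕ) < t} ∪ {t} := by
    ext j
    simp only [Set.mem_ofPred_eq, Set.mem_union, Set.mem_singleton_iff, Fin.ext_iff]
    omega
  rw [partialSpan, hset, Set.image_union, Set.image_singleton, Ideal.span_union]
  rfl

theorem partialSpan_of_le (x : Fin s → R) {k : ℕ} (hk : s ≤ k) :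
    partialSpan x k = Ideal.span (Set.range x) := by
  have huniv : {j : Fin s | (j : ℕ) < k} = Set.univ :=
    Set.eq_univ_of_forall fun j => lt_of_lt_of_le j.isLt hk
  rw [partialSpan, huniv, Set.image_univ]

theorem partialSpan_le {I : Ideal R} {x : Fin s → R} (hxI : ∀ k, x k ∈ I) (k : ℕ) :
    partialSpan x k ≤ I :=
  Ideal.span_le.mpr fun _ ⟨j, _, hj⟩ => hj ▸ hxI j

theorem partialSpan_mono (x : Fin s → R) {i t : ℕ} (hit : i ≤ t) :
    partialSpan x i ≤ partialSpan x t :=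
  Ideal.span_mono (Set.image_mono fun _ hj => lt_of_lt_of_le hj hit)

def ColonInfPowEq (I : Ideal R) (M : Type*) [AddCommGroup M] [Module R M] (x : Fin s → R)
    (m : ℕ) : Prop :=
  ∀ i : Fin s, mcolon (partialSpan x i • ⊤) (Ideal.span {x i}) ⊓ (I ^ (m + 1)) • ⊤
    = partialSpan x i • ((I ^ m) • (⊤ : Submodule R M))

variable {M : Type*} [AddCommGroup M] [Module R M]

theorem mem_partialSpan_smul_of_le {I : Ideal R} {x : Fin s → R} (hxI : ∀ k, x k ∈ I)
    {N : Submodule R M}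
    (hcol : ∀ t : Fin s,
      mcolon (partialSpan x t • ⊤) (Ideal.span {x t}) ⊓ I • N ≤ partialSpan x t • N)
    {z : M} {i : ℕ} (hz : z ∈ partialSpan x i • (⊤ : Submodule R M)) {t : ℕ} (hit : i ≤ t)
    (hts : t ≤ s) (hzt : z ∈ partialSpan x t • (I • N)) : z ∈ partialSpan x i • (I • N) := by
  induction t, hit using Nat.le_induction with
  | base => exact hzt
  | succ t hit ih =>
    let tf : Fin s := ⟨t, hts⟩
    refine ih (Nat.le_of_succ_le hts)
      (mem_smul_of_mem_sup_span_singleton_smul (hxI tf) (hcol tf) ?_ ?_)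
    · exact Submodule.smul_mono_left (partialSpan_mono x hit) hz
    · rwa [← partialSpan_succ]

theorem ColonInfPowEq.succ {I : Ideal R} {x : Fin s → R} {m : ℕ} (h : ColonInfPowEq I M x m)
    (hxI : ∀ k, x k ∈ I)
    (hred : Ideal.span (Set.range x) • ((I ^ (m + 1)) • (⊤ : Submodule R M))
      = (I ^ (m + 2)) • ⊤) :
    ColonInfPowEq I M x (m + 1) := by
  intro i
  apply le_antisymm
  · rintro z ⟨hcol, hz⟩
    have hzi : z ∈ partialSpan x i • (⊤ : Submodule R M) :=
      Submodule.smul_mono le_rfl le_top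
        ((h i).le ⟨hcol, Submodule.smul_mono_left (Ideal.pow_le_pow_right (by omega)) hz⟩)
    have hpow : I • ((I ^ m) • ⊤) = (I ^ (m + 1)) • (⊤ : Submodule R M) := by
      rw [pow_succ', Submodule.mul_smul]
    have hcolN : ∀ t : Fin s, mcolon (partialSpan x t • ⊤) (Ideal.span {x t})
        ⊓ I • ((I ^ m) • ⊤) ≤ partialSpan x t • ((I ^ m) • (⊤ : Submodule R M)) := fun t => by
      rw [hpow]
      exact (h t).le
    rw [← hpow]
    refine mem_partialSpan_smul_of_le hxI hcolN hzi i.isLt.le le_rfl ?_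
    rwa [partialSpan_of_le x le_rfl, hpow, hred]
  · rw [pow_succ' I (m + 1), Submodule.mul_smul]
    exact smul_le_mcolon_inf (partialSpan_le hxI i) _

end PartialSpan

theorem colon_inter_propagates_general {R : Type*} [CommRing R]
    {M : Type*} [AddCommGroup M] [Module R M]
    (I : Ideal R) {s : ℕ} (x : Fin s → R)
    (hred : IsReduction (Ideal.span (Set.range x)) I M)
    (ℓ : ℕ) (hℓ : redNum (Ideal.span (Set.range x)) I M ≤ ℓ)
    (hyp : ∀ i : Fin s,
      mcolon ((Ideal.span (x '' {j | j < i})) • (⊤ : Submodule R M)) (Ideal.span {x i})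
          ⊓ ((I ^ (ℓ + 1)) • ⊤)
        = (Ideal.span (x '' {j | j < i})) • ((I ^ ℓ) • (⊤ : Submodule R M))) :
    ∀ n : ℕ, ℓ + 1 ≤ n → ∀ i : Fin s,
      mcolon ((Ideal.span (x '' {j | j < i})) • (⊤ : Submodule R M)) (Ideal.span {x i})
          ⊓ ((I ^ n) • ⊤)
        = (Ideal.span (x '' {j | j < i})) • ((I ^ (n - 1)) • (⊤ : Submodule R M)) := by
  have hxI : ∀ k, x k ∈ I := fun k => hred.1 (Ideal.subset_span ⟨k, rfl⟩)
  have hprop : ∀ m, ℓ ≤ m → ColonInfPowEq I M x m := by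
    intro m hm
    induction m, hm using Nat.le_induction with
    | base => exact hyp
    | succ m hm ih => exact ih.succ hxI (hred.smul_pow_eq_of_redNum_le (hℓ.trans (by omega)))
  intro n hn i
  obtain ⟨m, rfl⟩ : ∃ m, n = m + 1 := ⟨n - 1, by omega⟩
  rw [Nat.add_sub_cancel]
  exact hprop m (by omega) i

/-- propagation of colon-intersection equalities above the reduction
number. -/
theorem colon_inter_propagates {R : Type*} [CommRing R] [IsNoetherianRing R]
    {M : Type*} [AddCommGroup M] [Module R M] [Module.Finite R M]
    (I : Ideal R) {s : ℕ} (x : Fin s → R)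
    (hred : IsReduction (Ideal.span (Set.range x)) I M)
    (ℓ : ℕ) (hℓ : redNum (Ideal.span (Set.range x)) I M ≤ ℓ)
    (hyp : ∀ i : Fin s,
      mcolon ((Ideal.span (x '' {j | j < i})) • (⊤ : Submodule R M)) (Ideal.span {x i})
          ⊓ ((I ^ (ℓ + 1)) • ⊤)
        = (Ideal.span (x '' {j | j < i})) • ((I ^ ℓ) • (⊤ : Submodule R M))) :
    ∀ n : ℕ, ℓ + 1 ≤ n → ∀ i : Fin s,
      mcolon ((Ideal.span (x '' {j | j < i})) • (⊤ : Submodule R M)) (Ideal.span {x i})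
          ⊓ ((I ^ n) • ⊤)
        = (Ideal.span (x '' {j | j < i})) • ((I ^ (n - 1)) • (⊤ : Submodule R M)) :=
  colon_inter_propagates_general I x hred ℓ hℓ hyp
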